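/- Let P satisfy Assumption (A) with constants ρ ∈ (0,1), C0 < ∞ and function V. Then there exists a constant C1 ∈ (0,∞) such that for every k ≥ 1 and every n with a_k ≤ n < a_{k+1}, ⦀L^(n) − π⦀_V ≤ C1 ρ^{n−a_k} ⦀L^(a_k) − π⦀_V, where L^(n) and L^(a_k) are viewed as transition kernels x ↦ L^(n)(x,·). -/

import Mathlib

/-!
Between two resampling times the chain moves by `P` alone, so for `a_k ≤ n < a_{k+1}` and
`m = n - a_k` we have `L^(n)(x,·) = L^(a_k)(x,·) P^m`. For a test function `f` with `|f|_V ≤ 1`,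
Assumption (A) gives `|P^m f - π f|_V ≤ C0 ρ^m`, and `π P^m = π`; hence
`(L^(n) - π) f = (L^(a_k) - π)(P^m f - π f)` is at most `C0 ρ^m ⦀L^(a_k) - π⦀_V V(x)`.
All integrals involved make sense because a finite `V`-norm distance to a measure integrating `V`
forces integrability of `V`: the truncations `min V N` are test functions.
-/

open MeasureTheory ProbabilityTheory Filter Topology
open scoped ENNReal

namespace BetweenResamplingBound

variable {X : Type*} [MeasurableSpace X]

/-- `iter P n` is the `n`-step transition kernel `P^n`. -/
noncomputable def iter (P : X → Measure X) : ℕ → X → Measure X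
  | 0 => fun x => Measure.dirac x
  | n + 1 => fun x => (iter P n x).bind P

/-- `‖μ - ν‖_V ≤ K`, the supremum being taken over measurable test functions. -/
def VNormSubLE (V : X → ℝ) (μ ν : Measure X) (K : ℝ) : Prop :=
  ∀ f : X → ℝ, Measurable f → (∀ x, |f x| ≤ V x) → |∫ y, f y ∂μ - ∫ y, f y ∂ν| ≤ K

section VNorm

variable {V : X → ℝ} {μ ν : Measure X} {K : ℝ}

theorem integrable_of_forall_integral_le [IsFiniteMeasure μ] (hV : Measurable V)
    (hV0 : ∀ x, 0 ≤ V x)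
    (h : ∀ f : X → ℝ, Measurable f → (∀ x, |f x| ≤ V x) → ∫ x, f x ∂μ ≤ K) :
    Integrable V μ := by
  set T : ℕ → X → ℝ := fun N x => min (V x) N
  have hT_meas : ∀ N, Measurable (T N) := fun N => hV.min measurable_const
  have hT_nonneg : ∀ N x, 0 ≤ T N x := fun N x => le_min (hV0 x) N.cast_nonneg
  have hT_le : ∀ N, ∫⁻ x, ENNReal.ofReal (T N x) ∂μ ≤ ENNReal.ofReal K := by
    intro N
    have hT_int : Integrable (T N) μ :=
      Integrable.of_bound (hT_meas N).aestronglyMeasurable N <| ae_of_all _ fun x => by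
        rw [Real.norm_of_nonneg (hT_nonneg N x)]
        exact min_le_right _ _
    rw [← ofReal_integral_eq_lintegral_ofReal hT_int (ae_of_all _ (hT_nonneg N))]
    refine ENNReal.ofReal_le_ofReal (h _ (hT_meas N) fun x => ?_)
    rw [abs_of_nonneg (hT_nonneg N x)]
    exact min_le_left _ _
  have hT_tendsto : Tendsto (fun N => ∫⁻ x, ENNReal.ofReal (T N x) ∂μ) atTop
      (𝓝 (∫⁻ x, ENNReal.ofReal (V x) ∂μ)) := by
    refine lintegral_tendsto_of_tendsto_of_monotone
      (fun N => (hT_meas N).ennreal_ofReal.aemeasurable)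
      (ae_of_all _ fun x M N hMN => ENNReal.ofReal_le_ofReal <|
        min_le_min_left _ (by exact_mod_cast hMN))
      (ae_of_all _ fun x => (ENNReal.continuous_ofReal.tendsto _).comp ?_)
    refine tendsto_const_nhds.congr' ((eventually_ge_atTop ⌈V x⌉₊).mono fun N hN => ?_)
    exact (min_eq_left ((Nat.le_ceil _).trans (by exact_mod_cast hN))).symm
  refine ⟨hV.aestronglyMeasurable, (hasFiniteIntegral_iff_ofReal (ae_of_all _ hV0)).2 ?_⟩
  exact (le_of_tendsto' hT_tendsto hT_le).trans_lt ENNReal.ofReal_lt_top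

theorem VNormSubLE.symm (h : VNormSubLE V μ ν K) : VNormSubLE V ν μ K :=
  fun f hf hfV => abs_sub_comm (∫ y, f y ∂μ) _ ▸ h f hf hfV

theorem VNormSubLE.integral_le (h : VNormSubLE V μ ν K) (hV : Measurable V)
    (hV0 : ∀ x, 0 ≤ V x) : ∫ x, V x ∂μ ≤ ∫ x, V x ∂ν + K := by
  have := h V hV fun x => (abs_of_nonneg (hV0 x)).le
  linarith [(abs_le.1 this).2]

theorem VNormSubLE.integrable [IsFiniteMeasure μ] (h : VNormSubLE V μ ν K) (hV : Measurable V)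
    (hV0 : ∀ x, 0 ≤ V x) (hνV : Integrable V ν) : Integrable V μ := by
  refine integrable_of_forall_integral_le (K := ∫ x, V x ∂ν + K) hV hV0 fun f hf hfV => ?_
  have hf_le : ∫ x, f x ∂ν ≤ ∫ x, V x ∂ν :=
    integral_mono (hνV.mono' hf.aestronglyMeasurable (ae_of_all _ hfV)) hνV
      fun x => (le_abs_self _).trans (hfV x)
  linarith [(abs_le.1 (h f hf hfV)).2]

end VNorm

section Comp

variable {α β E : Type*} [MeasurableSpace α] [MeasurableSpace β]
  [NormedAddCommGroup E] [NormedSpace ℝ E] {κ : Kernel α β} {μ : Measure α} {f : β → E}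

theorem integral_comp_eq_integral_integral (hf : Integrable f (κ ∘ₘ μ)) :
    ∫ y, f y ∂(κ ∘ₘ μ) = ∫ x, ∫ y, f y ∂κ x ∂μ := by
  rw [Measure.comp_eq_comp_const_apply] at hf ⊢
  simpa using Kernel.integral_comp hf

theorem integrable_integral_of_integrable_comp (hf : Integrable f (κ ∘ₘ μ)) :
    Integrable (fun x => ∫ y, f y ∂κ x) μ := by
  rw [Measure.comp_eq_comp_const_apply] at hf
  simpa using hf.integral_comp

end Comp

section VNormComp

variable {V : X → ℝ} {κ : Kernel X X} {μ π : Measure X} {B D : ℝ}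

theorem integrable_comp_of_forall_vNormSubLE [IsFiniteKernel κ] [IsFiniteMeasure μ]
    (hV : Measurable V) (hV0 : ∀ x, 0 ≤ V x) (hπV : Integrable V π) (hμV : Integrable V μ)
    (hκ : ∀ y, VNormSubLE V (κ y) π (D * V y)) : Integrable V (κ ∘ₘ μ) := by
  refine (Measure.integrable_comp_iff hV.aestronglyMeasurable).2
    ⟨ae_of_all _ fun y => (hκ y).integrable hV hV0 hπV, ?_⟩
  simp_rw [Real.norm_of_nonneg (hV0 _)]
  refine ((integrable_const (∫ x, V x ∂π)).add (hμV.const_mul D)).mono'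
    hV.stronglyMeasurable.integral_kernel.aestronglyMeasurable (ae_of_all _ fun y => ?_)
  rw [Real.norm_of_nonneg (integral_nonneg hV0)]
  exact (hκ y).integral_le hV hV0

theorem VNormSubLE.comp [IsMarkovKernel κ] [IsProbabilityMeasure μ] [IsProbabilityMeasure π]
    (hV : Measurable V) (hV0 : ∀ x, 0 ≤ V x) (hπV : Integrable V π) (hinv : κ ∘ₘ π = π)
    (hD : 0 < D) (hκ : ∀ y, VNormSubLE V (κ y) π (D * V y)) (hμ : VNormSubLE V μ π B) :
    VNormSubLE V (κ ∘ₘ μ) π (D * B) := by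
  intro f hf hfV
  set c := ∫ y, f y ∂π
  set h : X → ℝ := fun y => D⁻¹ * (∫ z, f z ∂κ y - c)
  have hf_int : ∀ (ν : Measure X) [IsFiniteMeasure ν], Integrable V ν → Integrable f (κ ∘ₘ ν) :=
    fun ν _ hνV => (integrable_comp_of_forall_vNormSubLE hV hV0 hπV hνV hκ).mono'
      hf.aestronglyMeasurable (ae_of_all _ hfV)
  have h_integral : ∀ (ν : Measure X) [IsProbabilityMeasure ν], Integrable V ν →
      ∫ y, h y ∂ν = D⁻¹ * (∫ y, f y ∂(κ ∘ₘ ν) - c) := by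
    intro ν _ hνV
    rw [integral_const_mul, integral_sub (integrable_integral_of_integrable_comp
      (hf_int ν hνV)) (integrable_const c), integral_const,
      integral_comp_eq_integral_integral (hf_int ν hνV)]
    simp
  have h_test : ∀ y, |h y| ≤ V y := fun y => by
    rw [abs_mul, abs_of_pos (inv_pos.2 hD), inv_mul_le_iff₀ hD]
    exact hκ y f hf hfV
  have h_meas : Measurable h :=
    (hf.stronglyMeasurable.integral_kernel.measurable.sub_const c).const_mul D⁻¹
  have hμh := hμ h h_meas h_test
  rw [h_integral μ (hμ.integrable hV hV0 hπV), h_integral π hπV,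
    hinv, sub_self, mul_zero, sub_zero, abs_mul, abs_of_pos (inv_pos.2 hD),
    inv_mul_le_iff₀ hD] at hμh
  exact hμh

end VNormComp

section Iterates

variable {P : X → Measure X}

theorem measurable_iter (hP : Measurable P) (n : ℕ) : Measurable (iter P n) := by
  induction n with
  | zero => exact Measure.measurable_dirac
  | succ n ih => exact (Measure.measurable_bind' hP).comp ih

noncomputable def iterKernel (hP : Measurable P) (n : ℕ) : Kernel X X :=
  ⟨iter P n, measurable_iter hP n⟩

theorem coe_iterKernel (hP : Measurable P) (n : ℕ) : ⇑(iterKernel hP n) = iter P n := rfl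

theorem isMarkovKernel_iterKernel (hP : Measurable P) (hPprob : ∀ x, IsProbabilityMeasure (P x))
    (n : ℕ) : IsMarkovKernel (iterKernel hP n) := by
  refine ⟨fun x => ?_⟩
  induction n generalizing x with
  | zero => exact Measure.dirac.isProbabilityMeasure
  | succ n ih =>
    have : IsProbabilityMeasure (iter P n x) := ih x
    exact isProbabilityMeasure_bind hP.aemeasurable (ae_of_all _ hPprob)

theorem bind_iter_succ (hP : Measurable P) (μ : Measure X) (n : ℕ) :
    (μ.bind (iter P n)).bind P = μ.bind (iter P (n + 1)) :=
  Measure.bind_bind (measurable_iter hP n).aemeasurable hP.aemeasurable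

theorem bind_iter_of_bind_eq (hP : Measurable P) {π : Measure X} (hinv : π.bind P = π) (n : ℕ) :
    π.bind (iter P n) = π := by
  induction n with
  | zero => exact Measure.bind_dirac
  | succ n ih => rw [← bind_iter_succ hP, ih, hinv]

theorem eq_bind_iter_of_forall_step (hP : Measurable P) {μ : ℕ → Measure X} {m n : ℕ}
    (hmn : m ≤ n) (hstep : ∀ j, m < j → j ≤ n → μ j = (μ (j - 1)).bind P) :
    μ n = (μ m).bind (iter P (n - m)) := by
  induction n, hmn using Nat.le_induction with
  | base => rw [Nat.sub_self]; exact Measure.bind_dirac.symm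
  | succ n hmn ih =>
    rw [hstep (n + 1) (by omega) le_rfl, Nat.add_sub_cancel,
      ih fun j hj hjn => hstep j hj (by omega), bind_iter_succ hP, Nat.sub_add_comm hmn]

end Iterates

section Resampling

theorem apply_ne_of_lt_of_lt_apply_succ {a : ℕ → ℕ} (hamono : ∀ k, 1 ≤ k → a k < a (k + 1))
    {j k n : ℕ} (hj : 1 ≤ j) (hk : 1 ≤ k) (hkn : a k < n) (hnk : n < a (k + 1)) : a j ≠ n := by
  have hmono : StrictMono fun i => a (i + 1) :=
    strictMono_nat_of_lt_succ fun i => hamono (i + 1) (by omega)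
  obtain ⟨j, rfl⟩ : ∃ i, j = i + 1 := ⟨j - 1, by omega⟩
  obtain ⟨k, rfl⟩ : ∃ i, k = i + 1 := ⟨k - 1, by omega⟩
  rcases le_or_gt j k with hjk | hjk
  · have := hmono.monotone hjk
    omega
  · have := hmono.monotone (show k + 1 ≤ j by omega)
    omega

theorem isProbabilityMeasure_inv_smul_sum {ν : ℕ → Measure X} {m : ℕ} (hm : m ≠ 0)
    (hν : ∀ j < m, IsProbabilityMeasure (ν j)) :
    IsProbabilityMeasure ((m : ℝ≥0∞)⁻¹ • ∑ j ∈ Finset.range m, ν j) := by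
  constructor
  have h_univ : ∀ j ∈ Finset.range m, ν j Set.univ = 1 :=
    fun j hj => (hν j (Finset.mem_range.1 hj)).measure_univ
  rw [Measure.smul_apply, Measure.finsetSum_apply, Finset.sum_congr rfl h_univ,
    Finset.sum_const, Finset.card_range, nsmul_eq_mul, mul_one, smul_eq_mul]
  exact ENNReal.inv_mul_cancel (by exact_mod_cast hm) (ENNReal.natCast_ne_top m)

theorem isProbabilityMeasure_of_resampling {P : X → Measure X} (hP : Measurable P)
    (hPprob : ∀ x, IsProbabilityMeasure (P x)) (a : ℕ → ℕ) (L : ℕ → X → Measure X)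
    (hL0 : ∀ x, L 0 x = Measure.dirac x)
    (hLstep : ∀ n : ℕ, 1 ≤ n → (¬ ∃ k, 1 ≤ k ∧ a k = n) →
      ∀ x, L n x = (L (n - 1) x).bind P)
    (hLres : ∀ k, 1 ≤ k →
      ∀ x, L (a k) x = ((a k : ℝ≥0∞))⁻¹ • ∑ j ∈ Finset.range (a k), L j x)
    (n : ℕ) (x : X) : IsProbabilityMeasure (L n x) := by
  induction n using Nat.strong_induction_on with
  | _ n ih =>
    rcases Nat.eq_zero_or_pos n with rfl | hn
    · rw [hL0]
      infer_instance
    by_cases hres : ∃ k, 1 ≤ k ∧ a k = n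
    · obtain ⟨k, hk, rfl⟩ := hres
      rw [hLres k hk x]
      exact isProbabilityMeasure_inv_smul_sum hn.ne' fun j hj => ih j hj
    · have := ih (n - 1) (by omega)
      rw [hLstep n hn hres x]
      exact isProbabilityMeasure_bind hP.aemeasurable (ae_of_all _ hPprob)

end Resampling

theorem vnorm_bound_between_resampling_times_general
    (P : X → Measure X) (hPmeas : Measurable P)
    (hPprob : ∀ x, IsProbabilityMeasure (P x))
    (π : Measure X) (hπ : IsProbabilityMeasure π) (hinv : π.bind P = π)
    (V : X → ℝ) (hVmeas : Measurable V) (hV1 : ∀ x, 1 ≤ V x)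
    (ρ C0 : ℝ) (hρ0 : 0 < ρ) (hC0 : 0 ≤ C0)
    -- Assumption (A): `⦀P^n − π⦀_V ≤ C0 ρ^n` for all `n ≥ 0`
    (hA : ∀ f : X → ℝ, Measurable f → (∀ x, |f x| ≤ V x) →
      ∀ (n : ℕ) (x : X),
        |∫ y, f y ∂(iter P n x) - ∫ y, f y ∂π| ≤ C0 * ρ ^ n * V x)
    -- the resampling schedule: a strictly increasing sequence of positive integers
    (a : ℕ → ℕ) (hamono : ∀ k, 1 ≤ k → a k < a (k + 1))
    -- the laws `L^(n)(x,·)` of the chain with resampling from the past, burn-in 0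
    (L : ℕ → X → Measure X)
    (hL0 : ∀ x, L 0 x = Measure.dirac x)
    (hLstep : ∀ n : ℕ, 1 ≤ n → (¬ ∃ k, 1 ≤ k ∧ a k = n) →
      ∀ x, L n x = (L (n - 1) x).bind P)
    (hLres : ∀ k, 1 ≤ k →
      ∀ x, L (a k) x = ((a k : ℝ≥0∞))⁻¹ • ∑ j ∈ Finset.range (a k), L j x) :
    ∃ C1 : ℝ, 0 < C1 ∧
      ∀ k n : ℕ, 1 ≤ k → a k ≤ n → n < a (k + 1) →
        ∀ B : ℝ,
          -- `⦀L^(a_k) − π⦀_V ≤ B`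
          (∀ f : X → ℝ, Measurable f → (∀ x, |f x| ≤ V x) →
            ∀ x, |∫ y, f y ∂(L (a k) x) - ∫ y, f y ∂π| ≤ B * V x) →
          -- conclusion: `⦀L^(n) − π⦀_V ≤ C1 ρ^{n−a_k} B`
          ∀ f : X → ℝ, Measurable f → (∀ x, |f x| ≤ V x) →
            ∀ x, |∫ y, f y ∂(L n x) - ∫ y, f y ∂π| ≤
              C1 * ρ ^ (n - a k) * B * V x := by
  -- `C0 + 1` rather than `C0`: turning `P^m f - π f` into a test function divides by it.
  refine ⟨C0 + 1, by linarith, fun k n hk hkn hn B hB f hf hfV x => ?_⟩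
  have hV0 : ∀ y, 0 ≤ V y := fun y => zero_le_one.trans (hV1 y)
  have h_dirac : VNormSubLE V (Measure.dirac x) π (C0 * V x) := fun g hg hgV =>
    (hA g hg hgV 0 x).trans_eq (by ring)
  have hπV : Integrable V π := h_dirac.symm.integrable hVmeas hV0
    (integrable_dirac' hVmeas.stronglyMeasurable ENNReal.coe_lt_top)
  have hL_prob := isProbabilityMeasure_of_resampling hPmeas hPprob a L hL0 hLstep hLres (a k) x
  have hK_markov := isMarkovKernel_iterKernel hPmeas hPprob (n - a k)
  have h_window : L n x = (L (a k) x).bind (iter P (n - a k)) :=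
    eq_bind_iter_of_forall_step (μ := fun j => L j x) hPmeas hkn fun j hkj hjn =>
      hLstep j (by omega) (fun ⟨i, hi, hai⟩ => apply_ne_of_lt_of_lt_apply_succ hamono hi hk hkj
        (by omega) hai) x
  have h_iter : ∀ y, VNormSubLE V (iterKernel hPmeas (n - a k) y) π
      ((C0 + 1) * ρ ^ (n - a k) * V y) := fun y g hg hgV =>
    (hA g hg hgV (n - a k) y).trans <|
      mul_le_mul_of_nonneg_right (mul_le_mul_of_nonneg_right (by linarith) (by positivity)) (hV0 y)
  have h_comp : VNormSubLE V (iterKernel hPmeas (n - a k) ∘ₘ L (a k) x) π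
      ((C0 + 1) * ρ ^ (n - a k) * (B * V x)) :=
    VNormSubLE.comp hVmeas hV0 hπV
      (by rw [coe_iterKernel]; exact bind_iter_of_bind_eq hPmeas hinv _) (by positivity)
      h_iter fun g hg hgV => hB g hg hgV x
  rw [h_window, ← coe_iterKernel hPmeas]
  exact (h_comp f hf hfV).trans_eq (by ring)

/-- Under Assumption (A) there is a constant `C1 ∈ (0,∞)` such that for every
`k ≥ 1` and every `n` with `a_k ≤ n < a_{k+1}`,
`⦀L^(n) − π⦀_V ≤ C1 ρ^{n−a_k} ⦀L^(a_k) − π⦀_V`.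
The `V`-norms are expressed by testing against all measurable `f` with `|f|_V ≤ 1`: `B` is any
upper bound for `⦀L^(a_k) − π⦀_V`. -/
theorem vnorm_bound_between_resampling_times
    (P : X → Measure X) (hPmeas : Measurable P)
    (hPprob : ∀ x, IsProbabilityMeasure (P x))
    (π : Measure X) (hπ : IsProbabilityMeasure π) (hinv : π.bind P = π)
    (V : X → ℝ) (hVmeas : Measurable V) (hV1 : ∀ x, 1 ≤ V x)
    (ρ C0 : ℝ) (hρ0 : 0 < ρ) (hρ1 : ρ < 1) (hC0 : 0 ≤ C0)
    -- Assumption (A): `⦀P^n − π⦀_V ≤ C0 ρ^n` for all `n ≥ 0`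
    (hA : ∀ f : X → ℝ, Measurable f → (∀ x, |f x| ≤ V x) →
      ∀ (n : ℕ) (x : X),
        |∫ y, f y ∂(iter P n x) - ∫ y, f y ∂π| ≤ C0 * ρ ^ n * V x)
    -- the resampling schedule: a strictly increasing sequence of positive integers
    (a : ℕ → ℕ) (ha1 : 1 ≤ a 1) (hamono : ∀ k, 1 ≤ k → a k < a (k + 1))
    -- the laws `L^(n)(x,·)` of the chain with resampling from the past, burn-in 0
    (L : ℕ → X → Measure X)
    (hL0 : ∀ x, L 0 x = Measure.dirac x)
    (hLstep : ∀ n : ℕ, 1 ≤ n → (¬ ∃ k, 1 ≤ k ∧ a k = n) →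
      ∀ x, L n x = (L (n - 1) x).bind P)
    (hLres : ∀ k, 1 ≤ k →
      ∀ x, L (a k) x = ((a k : ℝ≥0∞))⁻¹ • ∑ j ∈ Finset.range (a k), L j x) :
    ∃ C1 : ℝ, 0 < C1 ∧
      ∀ k n : ℕ, 1 ≤ k → a k ≤ n → n < a (k + 1) →
        ∀ B : ℝ,
          -- `⦀L^(a_k) − π⦀_V ≤ B`
          (∀ f : X → ℝ, Measurable f → (∀ x, |f x| ≤ V x) →
            ∀ x, |∫ y, f y ∂(L (a k) x) - ∫ y, f y ∂π| ≤ B * V x) →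
          -- conclusion: `⦀L^(n) − π⦀_V ≤ C1 ρ^{n−a_k} B`
          ∀ f : X → ℝ, Measurable f → (∀ x, |f x| ≤ V x) →
            ∀ x, |∫ y, f y ∂(L n x) - ∫ y, f y ∂π| ≤
              C1 * ρ ^ (n - a k) * B * V x :=
  vnorm_bound_between_resampling_times_general P hPmeas hPprob π hπ hinv V hVmeas hV1 ρ C0 hρ0 hC0
    hA a hamono L hL0 hLstep hLres

end BetweenResamplingBound
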